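/- Disjointification lemma: Let w be a weight on Γ, and A, B ⊆ ℓ^{p,∞}(Γ,w) with |A| > max(|B|, ℵ_0). Suppose there exist K < ∞ and r > 1 with ‖∑_{x∈F} ε_x x‖ ≤ K|F|^{1/r} for all finite F ⊆ A and signs ε_x = ±1. Then there exists C ⊆ A with |C| = |A| such that the elements of C are pairwise disjoint, and |b| ∧ |c| = 0 for all b ∈ B, c ∈ C. -/

import Mathlib

open ENNReal

/-- The weak `ℓ^p` quasi-norm on a weighted set. -/
noncomputable def weakNorm {Γ : Type*} (p : ℝ) (w : Γ → ℝ) (x : Γ → ℝ) : ℝ≥0∞ :=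
  ⨆ (c : ℝ) (_ : 0 < c),
    ENNReal.ofReal c * (∑' γ : {γ : Γ // c < |x γ|}, ENNReal.ofReal (w γ.1)) ^ ((1 : ℝ)/p)

/-!
Choosing the signs so that the `γ`-coordinates add up, `n` elements `x ∈ A` with `|x γ| > c`
produce a signed sum of weak norm at least `n c w(γ)^{1/p}`, which beats the bound
`K n^{1/r}` for large `n` since `r > 1`. So each coordinate `γ` lies in the supports of only
countably many elements of `A`, and every element has countable support. A maximal family
`C ⊆ A` of pairwise disjoint elements, disjoint from `B`, then has `|C| = |A|`: otherwise the
supports of `C ∪ B` cover fewer than `|A|` coordinates, these meet the supports of fewer than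
`|A|` elements of `A`, and any remaining element of `A` could be added to `C`.
-/

universe u

open Cardinal

theorem Function.eq_zero_or_eq_zero_of_disjoint_support {α M : Type*} [Zero M] {f g : α → M}
    (h : Disjoint (Function.support f) (Function.support g)) (a : α) : f a = 0 ∨ g a = 0 := by
  by_contra! hfg
  exact Set.disjoint_left.mp h hfg.1 hfg.2

namespace Cardinal

theorem mk_biUnion_lt_of_countable {ι α : Type u} {s : Set ι} {f : ι → Set α}
    (hf : ∀ i ∈ s, (f i).Countable) {κ : Cardinal} (hκ : ℵ₀ < κ) (hs : #s < κ) :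
    #(⋃ i ∈ s, f i) < κ := by
  refine (mk_biUnion_le f s).trans_lt (mul_lt_of_lt hκ.le hs ?_)
  exact (ciSup_le' fun i : s => mk_le_aleph0_iff.mpr (hf i.1 i.2).to_subtype).trans_lt hκ

end Cardinal

theorem Set.Countable.sep_ne_zero_of_forall_pos {α : Type*} {s : Set α} {f : α → ℝ}
    (h : ∀ c > 0, {a ∈ s | c < |f a|}.Countable) : {a ∈ s | f a ≠ 0}.Countable := by
  refine (Set.countable_iUnion fun n : ℕ => h (1 / (n + 1)) (by positivity)).mono ?_
  rintro a ⟨ha, hfa⟩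
  obtain ⟨n, hn⟩ := exists_nat_one_div_lt (abs_pos.mpr hfa)
  exact Set.mem_iUnion.mpr ⟨n, ha, hn⟩

theorem Real.exists_nat_mul_rpow_lt {a : ℝ} (ha : 0 < a) (K : ℝ) {r : ℝ} (hr : 1 < r) :
    ∃ n : ℕ, 0 < n ∧ K * (n : ℝ) ^ (1 / r) < n * a := by
  have hs : 0 < 1 - 1 / r := sub_pos.mpr ((div_lt_one (by linarith)).mpr hr)
  obtain ⟨n, hKn, hn⟩ := (((tendsto_rpow_atTop hs).comp tendsto_natCast_atTop_atTop).eventually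
    (Filter.eventually_gt_atTop (K / a))).and (Filter.eventually_gt_atTop 0) |>.exists
  refine ⟨n, hn, ?_⟩
  have hn : (0 : ℝ) < n := by exact_mod_cast hn
  calc K * (n : ℝ) ^ (1 / r) < a * (n : ℝ) ^ (1 - 1 / r) * (n : ℝ) ^ (1 / r) := by
        gcongr; exact (div_lt_iff₀' ha).mp hKn
    _ = n * a := by rw [mul_assoc, ← Real.rpow_add hn, sub_add_cancel, Real.rpow_one, mul_comm]

section Disjointification

variable {α Γ : Type u} (supp : α → Set Γ) {A : Set α}

theorem exists_mem_forall_disjoint_of_mk_lt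
    (hfiber : ∀ γ, {a ∈ A | γ ∈ supp a}.Countable) (hA : ℵ₀ < #A)
    {T : Set α} (hT : ∀ t ∈ T, (supp t).Countable) (hTA : #T < #A) :
    ∃ a ∈ A, a ∉ T ∧ ∀ t ∈ T, Disjoint (supp a) (supp t) := by
  set S := ⋃ t ∈ T, supp t
  set D := ⋃ γ ∈ S, {a ∈ A | γ ∈ supp a}
  have hS : #S < #A := mk_biUnion_lt_of_countable hT hA hTA
  have hD : #D < #A := mk_biUnion_lt_of_countable (fun γ _ => hfiber γ) hA hS
  obtain ⟨a, haA, haTD⟩ : ∃ a ∈ A, a ∉ T ∪ D := by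
    by_contra! h
    exact ((mk_le_mk_of_subset h).trans (mk_union_le T D)).not_gt (add_lt_of_lt hA.le hTA hD)
  refine ⟨a, haA, fun h => haTD (.inl h), fun t ht => Set.disjoint_left.mpr fun γ hγa hγt => ?_⟩
  exact haTD (.inr (Set.mem_biUnion (Set.mem_biUnion ht hγt) ⟨haA, hγa⟩))

theorem exists_pairwiseDisjoint_of_countable_fibers {B : Set α}
    (hA : ∀ a ∈ A, (supp a).Countable) (hB : ∀ b ∈ B, (supp b).Countable)
    (hfiber : ∀ γ, {a ∈ A | γ ∈ supp a}.Countable) (hcard : max #B ℵ₀ < #A) :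
    ∃ C ⊆ A, #C = #A ∧ C.PairwiseDisjoint supp ∧ ∀ b ∈ B, ∀ c ∈ C, Disjoint (supp b) (supp c) := by
  obtain ⟨C, ⟨hCA, hCdisj, hCB⟩, hCmax⟩ : ∃ C, Maximal (fun C => C ⊆ A ∧ C.PairwiseDisjoint supp ∧
      ∀ b ∈ B, ∀ c ∈ C, Disjoint (supp b) (supp c)) C := by
    refine zorn_subset _ fun 𝒞 h𝒞 hchain => ⟨⋃₀ 𝒞, ⟨?_, ?_, ?_⟩, fun _ => Set.subset_sUnion_of_mem⟩
    · exact Set.sUnion_subset fun C hC => (h𝒞 hC).1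
    · exact (Set.pairwiseDisjoint_sUnion hchain.directedOn).mpr fun C hC => (h𝒞 hC).2.1
    · rintro b hb c ⟨C, hC, hc⟩
      exact (h𝒞 hC).2.2 b hb c hc
  refine ⟨C, hCA, ?_, hCdisj, hCB⟩
  by_contra hne
  have hA0 : ℵ₀ < #A := (le_max_right _ _).trans_lt hcard
  have hCB_lt : #(C ∪ B : Set α) < #A := (mk_union_le C B).trans_lt <|
    add_lt_of_lt hA0.le ((mk_le_mk_of_subset hCA).lt_of_ne hne) ((le_max_left _ _).trans_lt hcard)
  obtain ⟨a, haA, haCB, ha⟩ := exists_mem_forall_disjoint_of_mk_lt supp hfiber hA0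
    (T := C ∪ B) (fun t ht => ht.elim (fun htC => hA t (hCA htC)) (hB t)) hCB_lt
  have hins : insert a C ⊆ A ∧ (insert a C).PairwiseDisjoint supp ∧
      ∀ b ∈ B, ∀ c ∈ insert a C, Disjoint (supp b) (supp c) := by
    refine ⟨Set.insert_subset haA hCA, hCdisj.insert fun c hc _ => ha c (.inl hc), ?_⟩
    rintro b hb c (rfl | hc)
    exacts [(ha b (.inr hb)).symm, hCB b hb c hc]
  exact haCB (.inl (hCmax hins (Set.subset_insert a C) (Set.mem_insert a C)))

end Disjointification

section WeakNorm

variable {Γ : Type*} {p : ℝ} {w : Γ → ℝ}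

theorem ofReal_mul_tsum_rpow_le_weakNorm (x : Γ → ℝ) {c : ℝ} (hc : 0 < c) :
    ENNReal.ofReal c * (∑' γ : {γ : Γ // c < |x γ|}, ENNReal.ofReal (w γ.1)) ^ (1 / p)
      ≤ weakNorm p w x :=
  le_iSup₂ (f := fun (c : ℝ) (_ : 0 < c) => ENNReal.ofReal c *
    (∑' γ : {γ : Γ // c < |x γ|}, ENNReal.ofReal (w γ.1)) ^ (1 / p)) c hc

theorem ofReal_mul_rpow_le_weakNorm (hp : 0 ≤ p) (x : Γ → ℝ) {c : ℝ} (hc : 0 < c) {γ : Γ}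
    (hγ : c < |x γ|) : ENNReal.ofReal c * ENNReal.ofReal (w γ) ^ (1 / p) ≤ weakNorm p w x := by
  refine le_trans ?_ (ofReal_mul_tsum_rpow_le_weakNorm x hc)
  gcongr
  exact ENNReal.le_tsum (⟨γ, hγ⟩ : {γ : Γ // c < |x γ|})

theorem countable_setOf_lt_abs_of_weakNorm_ne_top (hp : 0 < p) (hw : ∀ γ, 0 < w γ)
    {x : Γ → ℝ} (hx : weakNorm p w x ≠ ⊤) {c : ℝ} (hc : 0 < c) : {γ | c < |x γ|}.Countable := by
  have hsum : ∑' γ : {γ : Γ // c < |x γ|}, ENNReal.ofReal (w γ.1) ≠ ⊤ := by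
    intro h
    have := ofReal_mul_tsum_rpow_le_weakNorm (p := p) (w := w) x hc
    rw [h, ENNReal.top_rpow_of_pos (by positivity), ENNReal.mul_top (by simpa using hc)] at this
    exact hx (top_le_iff.mp this)
  have hsupp := Summable.countable_support_ennreal hsum
  rw [Function.support_eq_univ fun γ => by simpa using hw γ.1, Set.countable_univ_iff] at hsupp
  exact Set.countable_coe_iff.mp hsupp

theorem countable_support_of_weakNorm_ne_top (hp : 0 < p) (hw : ∀ γ, 0 < w γ) {x : Γ → ℝ}
    (hx : weakNorm p w x ≠ ⊤) : (Function.support x).Countable :=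
  (Set.Countable.sep_ne_zero_of_forall_pos (s := Set.univ) fun _ hc =>
    (countable_setOf_lt_abs_of_weakNorm_ne_top hp hw hx hc).mono fun _ h => h.2).mono
    fun _ hγ => Set.mem_sep trivial hγ

theorem finite_sep_lt_abs_of_signed_sum_le (hp : 0 ≤ p) (hw : ∀ γ, 0 < w γ)
    {A : Set (Γ → ℝ)} {K r : ℝ} (hr : 1 < r)
    (hbound : ∀ F : Finset (Γ → ℝ), ↑F ⊆ A → ∀ ε : (Γ → ℝ) → ℝ,
      (∀ x ∈ F, ε x = 1 ∨ ε x = -1) →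
      weakNorm p w (∑ x ∈ F, ε x • x) ≤ ENNReal.ofReal (K * (F.card : ℝ) ^ ((1 : ℝ)/r)))
    (γ : Γ) {c : ℝ} (hc : 0 < c) : {x ∈ A | c < |x γ|}.Finite := by
  by_contra hinf
  have ha : 0 < c * w γ ^ (1 / p) := by have := hw γ; positivity
  obtain ⟨n, hn0, hn⟩ := Real.exists_nat_mul_rpow_lt ha K hr
  obtain ⟨F, hFA, rfl⟩ := Set.Infinite.exists_subset_card_eq hinf n
  have hF : F.Nonempty := Finset.card_pos.mp hn0
  set ε : (Γ → ℝ) → ℝ := fun x => if 0 ≤ x γ then 1 else -1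
  have hε : ∀ x ∈ F, ε x = 1 ∨ ε x = -1 := fun x _ => by by_cases h : 0 ≤ x γ <;> simp [ε, h]
  have hsum : (∑ x ∈ F, ε x • x) γ = ∑ x ∈ F, |x γ| := by
    rw [Finset.sum_apply]
    refine Finset.sum_congr rfl fun x _ => ?_
    by_cases h : 0 ≤ x γ
    · simp [ε, h, abs_of_nonneg h]
    · simp [ε, h, abs_of_neg (not_le.mp h)]
  have hlt : (F.card : ℝ) * c < |(∑ x ∈ F, ε x • x) γ| := by
    rw [hsum, abs_of_nonneg (Finset.sum_nonneg fun x _ => abs_nonneg _), ← nsmul_eq_mul,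
      ← Finset.sum_const]
    exact Finset.sum_lt_sum_of_nonempty hF fun x hx => (hFA hx).2
  have hle := (ofReal_mul_rpow_le_weakNorm hp _ (by positivity) hlt).trans
    (hbound F (fun x hx => (hFA hx).1) ε hε)
  rw [ENNReal.ofReal_rpow_of_pos (hw γ), ← ENNReal.ofReal_mul (by positivity),
    ENNReal.ofReal_le_ofReal_iff'] at hle
  rcases hle with hle | hle
  · linarith
  · nlinarith [(Nat.one_le_cast (α := ℝ)).mpr hn0]

end WeakNorm

/-- Disjointification lemma: if `A, B ⊆ ℓ^{p,∞}(Γ,w)` with `|A| > max(|B|, ℵ₀)` and signed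
sums over finite subsets of `A` are bounded by `K |F|^{1/r}` with `r > 1`, then there is
`C ⊆ A` with `|C| = |A|` consisting of pairwise disjoint elements, each disjoint from every
element of `B`. -/
theorem disjointification_lemma {Γ : Type*} (p : ℝ) (hp : 1 < p)
    (w : Γ → ℝ) (hw : ∀ γ, 0 < w γ)
    (A B : Set (Γ → ℝ))
    (hA : ∀ x ∈ A, weakNorm p w x ≠ ⊤) (hB : ∀ x ∈ B, weakNorm p w x ≠ ⊤)
    (hcard : max (Cardinal.mk B) Cardinal.aleph0 < Cardinal.mk A)
    (K r : ℝ) (hr : 1 < r)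
    (hbound : ∀ F : Finset (Γ → ℝ), ↑F ⊆ A → ∀ ε : (Γ → ℝ) → ℝ,
      (∀ x ∈ F, ε x = 1 ∨ ε x = -1) →
      weakNorm p w (∑ x ∈ F, ε x • x) ≤ ENNReal.ofReal (K * (F.card : ℝ) ^ ((1 : ℝ)/r))) :
    ∃ C ⊆ A, Cardinal.mk C = Cardinal.mk A ∧
      (∀ x ∈ C, ∀ y ∈ C, x ≠ y → ∀ γ, x γ = 0 ∨ y γ = 0) ∧
      (∀ b ∈ B, ∀ c ∈ C, ∀ γ, b γ = 0 ∨ c γ = 0) := by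
  have hp₀ : 0 < p := zero_lt_one.trans hp
  have hfiber (γ : Γ) : {x ∈ A | γ ∈ Function.support x}.Countable :=
    Set.Countable.sep_ne_zero_of_forall_pos fun c hc =>
      (finite_sep_lt_abs_of_signed_sum_le hp₀.le hw hr hbound γ hc).countable
  obtain ⟨C, hCA, hCcard, hCdisj, hCB⟩ := exists_pairwiseDisjoint_of_countable_fibers
    Function.support (fun x hx => countable_support_of_weakNorm_ne_top hp₀ hw (hA x hx))
    (fun x hx => countable_support_of_weakNorm_ne_top hp₀ hw (hB x hx)) hfiber hcard
  exact ⟨C, hCA, hCcard,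
    fun x hx y hy hxy => Function.eq_zero_or_eq_zero_of_disjoint_support (hCdisj hx hy hxy),
    fun b hb c hc => Function.eq_zero_or_eq_zero_of_disjoint_support (hCB b hb c hc)⟩
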